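/- For y1, y2 > 0 set K2(y1,y2) = (1−e^{−λ y1})^{α1}·(1−e^{−λ y2})^{α2+α3} and f2(y1, y2) = (θ / C(θ)) · f_GE(y1; α1, λ) · f_GE(y2; α2+α3, λ) · [ θ K2 · C''(θ K2) + C'(θ K2) ]. Then the double integral of f2 over the region { (y1, y2) : 0 < y2 < y1 } equals α1 / (α1+α2+α3). (This is the probability P(Y2 < Y1) under the BGEPS distribution; together with the masses α2/(α1+α2+α3) of f1 on {y1 < y2} and α3/(α1+α2+α3) on the diagonal, the total mass is 1.) -/

import Mathlib

/-!
With `F_γ(x) = (1 - e^{-λx})^γ` the GE distribution function, `F_γ' = f_GE(·; γ, λ)` and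
`F_α F_β = F_{α+β}`, so `θ K2(y₁, y₂) = θ F_{α1}(y₁) F_{α2+α3}(y₂)` and the integrand is a total
derivative in `y₂`: `∂_{y₂} [F_{α2+α3}(y₂) C'(θ K2)]` times `θ f_GE(y₁; α1, λ) / C(θ)`. Integrating
`y₂` over `(0, y₁)` leaves `F_{α2+α3}(y₁) C'(θ F_T(y₁))` with `T = α1 + α2 + α3`, and
`f_GE(·; α1) F_{α2+α3} = (α1 / T) f_GE(·; T)` turns the outer integrand into `α1 / (T C(θ))` times
the derivative of `y₁ ↦ C(θ F_T(y₁))`, which increases from `C(0) = 0` to `C(θ)`.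
Nonnegative coefficients make every integrand nonnegative; this gives all the integrability needed
for Fubini and for the improper fundamental theorem of calculus.
-/

open Real Filter MeasureTheory

/-- The generalized exponential pdf `f_GE(x; α, λ) = α λ e^{-λx} (1-e^{-λx})^{α-1}`. -/
noncomputable def fGE (x α lam : ℝ) : ℝ :=
  α * lam * Real.exp (-lam * x) * (1 - Real.exp (-lam * x)) ^ (α - 1)

/-- `K2(y1,y2) = (1-e^{-λ y1})^{α1} (1-e^{-λ y2})^{α2+α3}`. -/
noncomputable def K2 (α1 α2 α3 lam y1 y2 : ℝ) : ℝ :=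
  (1 - Real.exp (-lam * y1)) ^ α1 * (1 - Real.exp (-lam * y2)) ^ (α2 + α3)

open Set Topology

section PowerSeries

noncomputable def derivCoeff (b : ℕ → ℝ) (n : ℕ) : ℝ := ((n : ℝ) + 1) * b (n + 1)

variable {b : ℕ → ℝ} {r : ℝ}

lemma summable_derivCoeff (hb : Summable fun n => |b n| * r ^ n) {s : ℝ} (hs : 0 ≤ s)
    (hsr : s < r) : Summable fun n => |derivCoeff b n| * s ^ n := by
  have hr : 0 < r := hs.trans_lt hsr
  set M := ∑' m, |b m| * r ^ m
  have hq : ‖s / r‖ < 1 := by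
    rw [norm_of_nonneg (by positivity)]; exact (div_lt_one hr).2 hsr
  have hgeom : Summable fun n : ℕ => M / r * (((n : ℝ) + 1) * (s / r) ^ n) := by
    refine Summable.mul_left _ ?_
    simpa [add_mul] using
      (summable_pow_mul_geometric_of_norm_lt_one 1 hq).add (summable_geometric_of_norm_lt_one hq)
  refine hgeom.of_nonneg_of_le (fun n => by positivity) fun n => ?_
  have hcoeff : |b (n + 1)| * r ^ (n + 1) ≤ M := hb.le_tsum (n + 1) fun m _ => by positivity
  calc |derivCoeff b n| * s ^ n
      = ((n : ℝ) + 1) * s ^ n / r ^ (n + 1) * (|b (n + 1)| * r ^ (n + 1)) := by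
        rw [derivCoeff, abs_mul, abs_of_nonneg (by positivity : (0 : ℝ) ≤ n + 1)]
        field_simp
    _ ≤ ((n : ℝ) + 1) * s ^ n / r ^ (n + 1) * M := by gcongr
    _ = M / r * (((n : ℝ) + 1) * (s / r) ^ n) := by rw [div_pow]; field_simp; ring

lemma hasDerivAt_tsum_mul_pow (hb : Summable fun n => |b n| * r ^ n) {x : ℝ} (hx : |x| < r) :
    HasDerivAt (fun y => ∑' n, b n * y ^ n) (∑' n, derivCoeff b n * x ^ n) x := by
  obtain ⟨s, hxs, hsr⟩ := exists_between hx
  have hs : 0 ≤ s := (abs_nonneg x).trans hxs.le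
  have hu : Summable fun n => |b n| * (n * s ^ (n - 1)) := by
    refine (summable_nat_add_iff 1).1 ((summable_derivCoeff hb hs hsr).congr fun n => ?_)
    rw [derivCoeff, abs_mul, abs_of_nonneg (by positivity : (0 : ℝ) ≤ n + 1)]
    push_cast
    ring
  have hbound : ∀ n, ∀ y ∈ Ioo (-s) s, ‖b n * (n * y ^ (n - 1))‖ ≤ |b n| * (n * s ^ (n - 1)) := by
    intro n y hy
    rw [norm_mul, norm_mul, norm_pow, Real.norm_eq_abs, Real.norm_natCast, Real.norm_eq_abs]
    gcongr
    exact abs_le.2 ⟨hy.1.le, hy.2.le⟩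
  have hsum : Summable fun n => b n * x ^ n := by
    refine hb.of_norm_bounded fun n => ?_
    rw [norm_mul, norm_pow, Real.norm_eq_abs, Real.norm_eq_abs]
    gcongr
  have hx' : x ∈ Ioo (-s) s := abs_lt.1 hxs
  refine (hasDerivAt_tsum_of_isPreconnected hu isOpen_Ioo isPreconnected_Ioo
    (fun n y _ => (hasDerivAt_pow n y).const_mul (b n)) hbound hx' hsum hx').congr_deriv ?_
  rw [tsum_eq_zero_add' ((summable_nat_add_iff 1).2 (hu.of_norm_bounded (hbound · x hx')))]
  simp only [derivCoeff, CharP.cast_eq_zero, zero_mul, mul_zero, zero_add, Nat.cast_add,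
    Nat.cast_one, Nat.add_sub_cancel]
  exact tsum_congr fun n => by ring

lemma derivCoeff_nonneg (hb : ∀ n, 0 ≤ b n) (n : ℕ) : 0 ≤ derivCoeff b n :=
  mul_nonneg (by positivity) (hb (n + 1))

lemma hasDerivAt_deriv_tsum_mul_pow (hb : Summable fun n => |b n| * r ^ n) {x : ℝ}
    (hx : |x| < r) :
    HasDerivAt (deriv fun y => ∑' n, b n * y ^ n)
      (∑' n, derivCoeff (derivCoeff b) n * x ^ n) x := by
  obtain ⟨s, hxs, hsr⟩ := exists_between hx
  have hderiv : deriv (fun y => ∑' n, b n * y ^ n) =ᶠ[𝓝 x]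
      fun y => ∑' n, derivCoeff b n * y ^ n := by
    filter_upwards [(isOpen_lt continuous_abs continuous_const).mem_nhds hx] with y hy
    exact (hasDerivAt_tsum_mul_pow hb hy).deriv
  exact (hasDerivAt_tsum_mul_pow (summable_derivCoeff hb ((abs_nonneg x).trans hxs.le) hsr)
    hxs).congr_of_eventuallyEq hderiv

end PowerSeries

section Integration

variable {φ w : ℝ → ℝ} {a b : ℝ}

lemma integrableOn_Ioo_deriv_of_nonneg (hab : a ≤ b) (hφ : ContinuousOn φ (Icc a b))
    (hderiv : ∀ y ∈ Ioo a b, HasDerivAt φ (w y) y) (hw : ∀ y ∈ Ioo a b, 0 ≤ w y) :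
    IntegrableOn w (Ioo a b) := by
  rw [← uIcc_of_le hab] at hφ
  have hmin : min a b = a := min_eq_left hab
  have hmax : max a b = b := max_eq_right hab
  exact ((intervalIntegrable_iff_integrableOn_Ioc_of_le hab).1
    (intervalIntegral.intervalIntegrable_deriv_of_nonneg hφ (by rwa [hmin, hmax])
      (by rwa [hmin, hmax]))).mono_set Ioo_subset_Ioc_self

lemma integral_Ioo_of_hasDerivAt_of_nonneg (hab : a ≤ b) (hφ : ContinuousOn φ (Icc a b))
    (hderiv : ∀ y ∈ Ioo a b, HasDerivAt φ (w y) y) (hw : ∀ y ∈ Ioo a b, 0 ≤ w y) :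
    ∫ y in Ioo a b, w y = φ b - φ a := by
  rw [← integral_Ioc_eq_integral_Ioo, ← intervalIntegral.integral_of_le hab]
  refine intervalIntegral.integral_eq_sub_of_hasDerivAt_of_le hab hφ hderiv ?_
  exact (intervalIntegrable_iff_integrableOn_Ioo_of_le hab).2
    (integrableOn_Ioo_deriv_of_nonneg hab hφ hderiv hw)

end Integration

lemma setIntegral_triangle_eq_integral_Ioi {f : ℝ × ℝ → ℝ} (hf : AEStronglyMeasurable f)
    (hf0 : ∀ x y, 0 < y → y < x → 0 ≤ f (x, y))
    (hslice : ∀ x, 0 < x → IntegrableOn (fun y => f (x, y)) (Ioo 0 x))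
    (hint : IntegrableOn (fun x => ∫ y in Ioo 0 x, f (x, y)) (Ioi 0)) :
    ∫ p in {q : ℝ × ℝ | 0 < q.2 ∧ q.2 < q.1}, f p = ∫ x in Ioi 0, ∫ y in Ioo 0 x, f (x, y) := by
  set S : Set (ℝ × ℝ) := {q | 0 < q.2 ∧ q.2 < q.1}
  have hS : MeasurableSet S :=
    (isOpen_lt continuous_const continuous_snd).inter (isOpen_lt continuous_snd continuous_fst)
      |>.measurableSet
  have hslice_eq : ∀ x y, S.indicator f (x, y) = (Ioo 0 x).indicator (fun y => f (x, y)) y :=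
    fun _ _ => rfl
  have hinner : ∀ x, ∫ y, S.indicator f (x, y) = ∫ y in Ioo 0 x, f (x, y) := fun x => by
    simp_rw [hslice_eq]; exact integral_indicator measurableSet_Ioo
  have hvanish : ∀ x ∉ Ioi (0 : ℝ), ∫ y in Ioo 0 x, f (x, y) = 0 := fun x hx => by
    rw [Ioo_eq_empty hx, Measure.restrict_empty, integral_zero_measure]
  have hI : Integrable (S.indicator f) (volume.prod volume) := by
    refine (integrable_prod_iff (hf.indicator hS)).2 ⟨Eventually.of_forall fun x => ?_, ?_⟩
    · simp_rw [hslice_eq]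
      refine (integrable_indicator_iff measurableSet_Ioo).2 ?_
      rcases lt_or_ge 0 x with hx | hx
      · exact hslice x hx
      · rw [Ioo_eq_empty hx.not_gt]; exact integrableOn_empty
    · refine ((integrableOn_iff_integrable_of_support_subset
        fun x hx => not_not.1 (mt (hvanish x) hx)).1 hint).congr (Eventually.of_forall fun x => ?_)
      dsimp only
      rw [← hinner]
      refine integral_congr_ae (Eventually.of_forall fun y => ?_)
      exact (Real.norm_of_nonneg (indicator_nonneg (fun q hq => hf0 q.1 q.2 hq.1 hq.2) _)).symm
  rw [← integral_indicator hS, Measure.volume_eq_prod, integral_prod _ hI]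
  simp_rw [hinner]
  exact (setIntegral_eq_integral_of_forall_compl_eq_zero hvanish).symm

section GeneralizedExponential

noncomputable def geCDF (x α lam : ℝ) : ℝ := (1 - exp (-lam * x)) ^ α

variable {x α β lam : ℝ}

lemma one_sub_exp_neg_mul_pos (hlam : 0 < lam) (hx : 0 < x) : 0 < 1 - exp (-lam * x) := by
  have : exp (-lam * x) < 1 := exp_lt_one_iff.2 (by nlinarith)
  linarith

lemma one_sub_exp_lt_one : 1 - exp (-lam * x) < 1 := by
  linarith [exp_pos (-lam * x)]

lemma geCDF_pos (hlam : 0 < lam) (hx : 0 < x) : 0 < geCDF x α lam :=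
  rpow_pos_of_pos (one_sub_exp_neg_mul_pos hlam hx) α

lemma geCDF_lt_one (hlam : 0 < lam) (hα : 0 < α) (hx : 0 < x) : geCDF x α lam < 1 :=
  rpow_lt_one (one_sub_exp_neg_mul_pos hlam hx).le one_sub_exp_lt_one hα

lemma geCDF_zero (hα : α ≠ 0) : geCDF 0 α lam = 0 := by
  simp [geCDF, zero_rpow hα]

lemma geCDF_mul_geCDF (hlam : 0 < lam) (hx : 0 < x) :
    geCDF x α lam * geCDF x β lam = geCDF x (α + β) lam :=
  (rpow_add (one_sub_exp_neg_mul_pos hlam hx) α β).symm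

lemma continuous_geCDF (hα : 0 ≤ α) : Continuous fun x => geCDF x α lam :=
  (continuous_rpow_const hα).comp (by fun_prop)

lemma tendsto_geCDF_atTop (hlam : 0 < lam) (hα : 0 ≤ α) :
    Tendsto (fun x => geCDF x α lam) atTop (𝓝 1) := by
  have hexp : Tendsto (fun x => exp (-lam * x)) atTop (𝓝 0) :=
    tendsto_exp_atBot.comp (tendsto_id.const_mul_atTop_of_neg (neg_neg_of_pos hlam))
  simpa [geCDF] using (hexp.const_sub 1).rpow_const (Or.inr hα)

lemma hasDerivAt_geCDF (hlam : 0 < lam) (hx : 0 < x) :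
    HasDerivAt (fun y => geCDF y α lam) (fGE x α lam) x := by
  have hbase : HasDerivAt (fun y => 1 - exp (-lam * y)) (exp (-lam * x) * lam) x := by
    simpa using (((hasDerivAt_id x).const_mul (-lam)).exp).const_sub 1
  refine (hbase.rpow_const (Or.inl (one_sub_exp_neg_mul_pos hlam hx).ne')).congr_deriv ?_
  rw [fGE]; ring

lemma fGE_pos (hlam : 0 < lam) (hα : 0 < α) (hx : 0 < x) : 0 < fGE x α lam := by
  have := rpow_pos_of_pos (one_sub_exp_neg_mul_pos hlam hx) (α - 1)
  rw [fGE]; positivity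

lemma fGE_mul_geCDF (hlam : 0 < lam) (hαβ : α + β ≠ 0) (hx : 0 < x) :
    fGE x α lam * geCDF x β lam = α / (α + β) * fGE x (α + β) lam := by
  have hsplit : geCDF x (α + β - 1) lam = geCDF x (α - 1) lam * geCDF x β lam := by
    rw [geCDF_mul_geCDF hlam hx]; ring_nf
  simp only [fGE, geCDF] at hsplit ⊢
  rw [hsplit]
  field_simp

end GeneralizedExponential

section Substitution

variable {G : ℝ → ℝ} {θ lam γ x : ℝ}

lemma mul_geCDF_mem_Ioo (hθ : 0 < θ) (hlam : 0 < lam) (hγ : 0 < γ) (hx : 0 < x) :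
    θ * geCDF x γ lam ∈ Ioo 0 θ :=
  ⟨mul_pos hθ (geCDF_pos hlam hx), mul_lt_of_lt_one_right hθ (geCDF_lt_one hlam hγ hx)⟩

lemma mul_geCDF_mem_Icc (hθ : 0 < θ) (hlam : 0 < lam) (hγ : 0 < γ) (hx : 0 ≤ x) :
    θ * geCDF x γ lam ∈ Icc 0 θ := by
  rcases hx.eq_or_lt with rfl | hx
  · simp [geCDF_zero hγ.ne', hθ.le]
  · exact Ioo_subset_Icc_self (mul_geCDF_mem_Ioo hθ hlam hγ hx)

lemma hasDerivAt_comp_mul_geCDF (hlam : 0 < lam) (hx : 0 < x)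
    (hG : DifferentiableAt ℝ G (θ * geCDF x γ lam)) :
    HasDerivAt (fun y => G (θ * geCDF y γ lam))
      (θ * fGE x γ lam * deriv G (θ * geCDF x γ lam)) x :=
  (hG.hasDerivAt.comp x ((hasDerivAt_geCDF hlam hx).const_mul θ)).congr_deriv (by ring)

lemma integrableOn_Ioi_and_integral_deriv_comp_mul_geCDF (hθ : 0 < θ) (hlam : 0 < lam) (hγ : 0 < γ)
    (hG : ∀ u ∈ Icc 0 θ, DifferentiableAt ℝ G u) (hG' : ∀ u ∈ Ioo 0 θ, 0 ≤ deriv G u) :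
    IntegrableOn (fun x => θ * fGE x γ lam * deriv G (θ * geCDF x γ lam)) (Ioi 0) ∧
      ∫ x in Ioi 0, θ * fGE x γ lam * deriv G (θ * geCDF x γ lam) = G θ - G 0 := by
  have hcont : ContinuousWithinAt (fun x => G (θ * geCDF x γ lam)) (Ici 0) 0 := by
    refine ContinuousAt.continuousWithinAt ?_
    refine ContinuousAt.comp_of_eq (hG 0 ⟨le_rfl, hθ.le⟩).continuousAt
      ((continuous_geCDF hγ.le).continuousAt.const_mul θ) ?_
    simp [geCDF_zero hγ.ne']
  have hderiv : ∀ x ∈ Ioi (0 : ℝ), HasDerivAt (fun x => G (θ * geCDF x γ lam))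
      (θ * fGE x γ lam * deriv G (θ * geCDF x γ lam)) x := fun x hx =>
    hasDerivAt_comp_mul_geCDF hlam hx (hG _ (mul_geCDF_mem_Icc hθ hlam hγ (le_of_lt hx)))
  have hnonneg : ∀ x ∈ Ioi (0 : ℝ), 0 ≤ θ * fGE x γ lam * deriv G (θ * geCDF x γ lam) :=
    fun x hx => mul_nonneg (mul_nonneg hθ.le (fGE_pos hlam hγ hx).le)
      (hG' _ (mul_geCDF_mem_Ioo hθ hlam hγ hx))
  have hlim : Tendsto (fun x => G (θ * geCDF x γ lam)) atTop (𝓝 (G θ)) :=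
    (hG θ ⟨hθ.le, le_rfl⟩).continuousAt.tendsto.comp
      (by simpa using (tendsto_geCDF_atTop hlam hγ.le).const_mul θ)
  refine ⟨integrableOn_Ioi_deriv_of_nonneg hcont hderiv hnonneg hlim, ?_⟩
  rw [integral_Ioi_of_hasDerivAt_of_nonneg hcont hderiv hnonneg hlim, geCDF_zero hγ.ne', mul_zero]

variable {g : ℝ → ℝ} {c β y : ℝ}

lemma hasDerivAt_geCDF_mul_comp (hlam : 0 < lam) (hy : 0 < y)
    (hg : DifferentiableAt ℝ g (c * geCDF y β lam)) :
    HasDerivAt (fun z => geCDF z β lam * g (c * geCDF z β lam))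
      (fGE y β lam * (c * geCDF y β lam * deriv g (c * geCDF y β lam) +
        g (c * geCDF y β lam))) y :=
  ((hasDerivAt_geCDF hlam hy).mul (hasDerivAt_comp_mul_geCDF hlam hy hg)).congr_deriv (by ring)

lemma deriv_geCDF_mul_comp_nonneg (hc : 0 < c) (hlam : 0 < lam) (hβ : 0 < β) (hy : 0 < y)
    (hg : ∀ u ∈ Ioo 0 c, 0 ≤ g u) (hg' : ∀ u ∈ Ioo 0 c, 0 ≤ deriv g u) :
    0 ≤ fGE y β lam * (c * geCDF y β lam * deriv g (c * geCDF y β lam) +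
      g (c * geCDF y β lam)) := by
  have hu := mul_geCDF_mem_Ioo hc hlam hβ hy
  exact mul_nonneg (fGE_pos hlam hβ hy).le (add_nonneg (mul_nonneg hu.1.le (hg' _ hu)) (hg _ hu))

lemma integrableOn_Ioo_and_integral_deriv_geCDF_mul_comp {x : ℝ} (hc : 0 < c) (hlam : 0 < lam)
    (hβ : 0 < β) (hx : 0 < x) (hgd : ∀ u ∈ Icc 0 c, DifferentiableAt ℝ g u)
    (hg : ∀ u ∈ Ioo 0 c, 0 ≤ g u) (hg' : ∀ u ∈ Ioo 0 c, 0 ≤ deriv g u) :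
    IntegrableOn (fun y => fGE y β lam * (c * geCDF y β lam * deriv g (c * geCDF y β lam) +
        g (c * geCDF y β lam))) (Ioo 0 x) ∧
      ∫ y in Ioo 0 x, fGE y β lam * (c * geCDF y β lam * deriv g (c * geCDF y β lam) +
        g (c * geCDF y β lam)) = geCDF x β lam * g (c * geCDF x β lam) := by
  have hφ : ContinuousOn (fun z => geCDF z β lam * g (c * geCDF z β lam)) (Icc 0 x) :=
    fun y hy => ((continuous_geCDF hβ.le).continuousAt.mul
      ((hgd _ (mul_geCDF_mem_Icc hc hlam hβ hy.1)).continuousAt.comp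
        (f := fun z => c * geCDF z β lam)
        ((continuous_geCDF hβ.le).continuousAt.const_mul c))).continuousWithinAt
  have hderiv : ∀ y ∈ Ioo 0 x, HasDerivAt (fun z => geCDF z β lam * g (c * geCDF z β lam))
      (fGE y β lam * (c * geCDF y β lam * deriv g (c * geCDF y β lam) +
        g (c * geCDF y β lam))) y := fun y hy =>
    hasDerivAt_geCDF_mul_comp hlam hy.1 (hgd _ (mul_geCDF_mem_Icc hc hlam hβ hy.1.le))
  have hw := fun y (hy : y ∈ Ioo 0 x) => deriv_geCDF_mul_comp_nonneg hc hlam hβ hy.1 hg hg'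
  refine ⟨integrableOn_Ioo_deriv_of_nonneg hx.le hφ hderiv hw, ?_⟩
  rw [integral_Ioo_of_hasDerivAt_of_nonneg hx.le hφ hderiv hw, geCDF_zero hβ.ne', zero_mul,
    sub_zero]

end Substitution

section LowerTriangle

variable {G : ℝ → ℝ} {θ lam α β : ℝ}

theorem setIntegral_lowerTriangle_bgepsDensity_eq (hθ : 0 < θ) (hlam : 0 < lam) (hα : 0 < α)
    (hβ : 0 < β) (hGθ : 0 < G θ) (hG0 : G 0 = 0) (hG : ∀ u ∈ Icc 0 θ, DifferentiableAt ℝ G u)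
    (hG' : ∀ u ∈ Icc 0 θ, DifferentiableAt ℝ (deriv G) u)
    (hG'0 : ∀ u ∈ Ioo 0 θ, 0 ≤ deriv G u) (hG''0 : ∀ u ∈ Ioo 0 θ, 0 ≤ deriv (deriv G) u) :
    ∫ p in {q : ℝ × ℝ | 0 < q.2 ∧ q.2 < q.1},
        θ / G θ * fGE p.1 α lam * fGE p.2 β lam *
          (θ * (geCDF p.1 α lam * geCDF p.2 β lam) *
              deriv (deriv G) (θ * (geCDF p.1 α lam * geCDF p.2 β lam)) +
            deriv G (θ * (geCDF p.1 α lam * geCDF p.2 β lam))) = α / (α + β) := by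
  set w : ℝ → ℝ → ℝ := fun c y => fGE y β lam * (c * geCDF y β lam *
    deriv (deriv G) (c * geCDF y β lam) + deriv G (c * geCDF y β lam))
  set f : ℝ × ℝ → ℝ := fun p => θ / G θ * fGE p.1 α lam * w (θ * geCDF p.1 α lam) p.2
  have hf : ∀ p : ℝ × ℝ, θ / G θ * fGE p.1 α lam * fGE p.2 β lam *
      (θ * (geCDF p.1 α lam * geCDF p.2 β lam) *
          deriv (deriv G) (θ * (geCDF p.1 α lam * geCDF p.2 β lam)) +
        deriv G (θ * (geCDF p.1 α lam * geCDF p.2 β lam))) = f p := fun p => by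
    simp only [f, w, mul_assoc]
  simp_rw [hf]
  have hinner : ∀ x, 0 < x → IntegrableOn (w (θ * geCDF x α lam)) (Ioo 0 x) ∧
      ∫ y in Ioo 0 x, w (θ * geCDF x α lam) y =
        geCDF x β lam * deriv G (θ * geCDF x α lam * geCDF x β lam) := fun x hx => by
    have hc := mul_geCDF_mem_Ioo hθ hlam hα hx
    have hsub : Icc 0 (θ * geCDF x α lam) ⊆ Icc 0 θ := Icc_subset_Icc le_rfl hc.2.le
    exact integrableOn_Ioo_and_integral_deriv_geCDF_mul_comp hc.1 hlam hβ hx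
      (fun u hu => hG' u (hsub hu))
      (fun u hu => hG'0 u (Ioo_subset_Ioo_right hc.2.le hu))
      (fun u hu => hG''0 u (Ioo_subset_Ioo_right hc.2.le hu))
  have hψ : ∀ x ∈ Ioi (0 : ℝ), ∫ y in Ioo 0 x, f (x, y) =
      α / (α + β) / G θ * (θ * fGE x (α + β) lam * deriv G (θ * geCDF x (α + β) lam)) :=
    fun x hx => by
      have hmass := fGE_mul_geCDF (α := α) (β := β) hlam (by positivity) hx
      simp only [f]
      rw [integral_const_mul, (hinner x hx).2, mul_assoc θ, geCDF_mul_geCDF hlam hx]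
      linear_combination (θ / G θ * deriv G (θ * geCDF x (α + β) lam)) * hmass
  obtain ⟨houter_int, houter⟩ :=
    integrableOn_Ioi_and_integral_deriv_comp_mul_geCDF hθ hlam (add_pos hα hβ) hG hG'0
  have hmeas : AEStronglyMeasurable f := by
    have := measurable_deriv G
    have := measurable_deriv (deriv G)
    simp only [f, w, fGE, geCDF]
    fun_prop
  have hf0 : ∀ x y, 0 < y → y < x → 0 ≤ f (x, y) := fun x y hy hyx => by
    have hc := mul_geCDF_mem_Ioo hθ hlam hα (hy.trans hyx)
    exact mul_nonneg (mul_nonneg (div_nonneg hθ.le hGθ.le) (fGE_pos hlam hα (hy.trans hyx)).le)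
      (deriv_geCDF_mul_comp_nonneg hc.1 hlam hβ hy
        (fun u hu => hG'0 u (Ioo_subset_Ioo_right hc.2.le hu))
        (fun u hu => hG''0 u (Ioo_subset_Ioo_right hc.2.le hu)))
  have hslice : ∀ x, 0 < x → IntegrableOn (fun y => f (x, y)) (Ioo 0 x) := fun x hx =>
    (hinner x hx).1.const_mul (θ / G θ * fGE x α lam)
  have hint : IntegrableOn (fun x => ∫ y in Ioo 0 x, f (x, y)) (Ioi 0) :=
    IntegrableOn.congr_fun (houter_int.const_mul _) (fun x hx => (hψ x hx).symm) measurableSet_Ioi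
  rw [setIntegral_triangle_eq_integral_Ioi hmeas hf0 hslice hint,
    setIntegral_congr_fun measurableSet_Ioi hψ, integral_const_mul, houter, hG0, sub_zero]
  field_simp

end LowerTriangle

theorem stmt_11_general (a : ℕ → ℝ) (ha : ∀ n, 0 ≤ a n)
    (θ : ℝ) (hθ : 0 < θ)
    (hrad : ∃ r : ℝ, θ < r ∧ Summable fun n : ℕ => |a (n + 1)| * r ^ (n + 1))
    (C : ℝ → ℝ) (hC : ∀ x : ℝ, C x = ∑' n : ℕ, a (n + 1) * x ^ (n + 1))
    (hCθ : 0 < C θ)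
    (α1 α2 α3 lam : ℝ) (hα1 : 0 < α1) (hα2 : 0 < α2) (hα3 : 0 < α3) (hlam : 0 < lam) :
    ∫ p in {q : ℝ × ℝ | 0 < q.2 ∧ q.2 < q.1},
        θ / C θ * fGE p.1 α1 lam * fGE p.2 (α2 + α3) lam *
          (θ * K2 α1 α2 α3 lam p.1 p.2 * deriv (deriv C) (θ * K2 α1 α2 α3 lam p.1 p.2) +
            deriv C (θ * K2 α1 α2 α3 lam p.1 p.2)) =
      α1 / (α1 + α2 + α3) := by
  obtain ⟨r, hθr, hsum⟩ := hrad
  set b : ℕ → ℝ := fun n => if n = 0 then 0 else a n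
  have hb : Summable fun n => |b n| * r ^ n := (summable_nat_add_iff 1).1 (by simpa [b] using hsum)
  have hb0 : ∀ n, 0 ≤ b n := fun n => by by_cases hn : n = 0 <;> simp [b, hn, ha n]
  have hC0 : C 0 = 0 := by simp [hC]
  have hCb : C = fun x => ∑' n, b n * x ^ n := funext fun x => by
    rw [hC, ← Nat.succ_injective.tsum_eq (f := fun n => b n * x ^ n)]
    · simp [b]
    · intro n hn
      obtain ⟨m, rfl⟩ := Nat.exists_eq_succ_of_ne_zero (n := n) (by rintro rfl; simp [b] at hn)
      exact ⟨m, rfl⟩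
  subst hCb
  have hr : ∀ u ∈ Icc 0 θ, |u| < r := fun u hu => by
    rw [abs_of_nonneg hu.1]; exact hu.2.trans_lt hθr
  rw [add_assoc]
  refine setIntegral_lowerTriangle_bgepsDensity_eq hθ hlam hα1 (add_pos hα2 hα3) hCθ hC0
    (fun u hu => (hasDerivAt_tsum_mul_pow hb (hr u hu)).differentiableAt)
    (fun u hu => (hasDerivAt_deriv_tsum_mul_pow hb (hr u hu)).differentiableAt)
    (fun u hu => ?_) (fun u hu => ?_)
  · rw [(hasDerivAt_tsum_mul_pow hb (hr u (Ioo_subset_Icc_self hu))).deriv]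
    exact tsum_nonneg fun n => mul_nonneg (derivCoeff_nonneg hb0 n) (pow_nonneg hu.1.le n)
  · rw [(hasDerivAt_deriv_tsum_mul_pow hb (hr u (Ioo_subset_Icc_self hu))).deriv]
    exact tsum_nonneg fun n =>
      mul_nonneg (derivCoeff_nonneg (derivCoeff_nonneg hb0) n) (pow_nonneg hu.1.le n)

/-- `P(Y2 < Y1) = α1/(α1+α2+α3)` under the BGEPS distribution: the double integral of
`f2(y1,y2) = (θ/C(θ)) f_GE(y1; α1, λ) f_GE(y2; α2+α3, λ) (θ K2 C''(θ K2) + C'(θ K2))`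
over `{(y1,y2) : 0 < y2 < y1}` equals `α1/(α1+α2+α3)`. -/
theorem stmt_11 (a : ℕ → ℝ) (ha : ∀ n, 0 ≤ a n) (hne : ∃ n : ℕ, 0 < a (n + 1))
    (θ : ℝ) (hθ : 0 < θ)
    (hrad : ∃ r : ℝ, θ < r ∧ Summable fun n : ℕ => |a (n + 1)| * r ^ (n + 1))
    (C : ℝ → ℝ) (hC : ∀ x : ℝ, C x = ∑' n : ℕ, a (n + 1) * x ^ (n + 1))
    (hCθ : 0 < C θ)
    (α1 α2 α3 lam : ℝ) (hα1 : 0 < α1) (hα2 : 0 < α2) (hα3 : 0 < α3) (hlam : 0 < lam) :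
    ∫ p in {q : ℝ × ℝ | 0 < q.2 ∧ q.2 < q.1},
        θ / C θ * fGE p.1 α1 lam * fGE p.2 (α2 + α3) lam *
          (θ * K2 α1 α2 α3 lam p.1 p.2 * deriv (deriv C) (θ * K2 α1 α2 α3 lam p.1 p.2) +
            deriv C (θ * K2 α1 α2 α3 lam p.1 p.2)) =
      α1 / (α1 + α2 + α3) :=
  stmt_11_general a ha θ hθ hrad C hC hCθ α1 α2 α3 lam hα1 hα2 hα3 hlam
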